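/- arXiv:2203.14740 — 2 statements merged into one kernel-verified Lean document; each statement's English description precedes it below -/
import Mathlib

section
/- For the Frank–Wolfe iterates and any point x* ∈ [0,1]^n, one has F(x(t_j) ∨ x*) ≥ e^{−t_j/(1+t_j)} F(x*) for every j ∈ {0,1,…,T}, where ∨ denotes the coordinatewise maximum. -/
/-- The harmonic number `H j = ∑_{k=1}^j 1/k` (with `H 0 = 0`). -/
noncomputable def harmonicNum (j : ℕ) : ℝ := ∑ k ∈ Finset.range j, (1 : ℝ) / (k + 1)

/-- `H_{2,j} = ∑_{k=1}^j 1/k²`. -/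
noncomputable def harmonicNum2 (j : ℕ) : ℝ := ∑ k ∈ Finset.range j, (1 : ℝ) / ((k : ℝ) + 1) ^ 2

/-- The time values `t_j = 1/(1 - ln(1 + H_j/H_T)) - 1` of the Frank–Wolfe algorithm. -/
noncomputable def fwTime (T j : ℕ) : ℝ :=
  1 / (1 - Real.log (1 + harmonicNum j / harmonicNum T)) - 1

/-- The Frank–Wolfe step ratio `e^{-1/(1+t_j) + 1/(1+t_{j+1})}`. -/
noncomputable def fwRatio (T j : ℕ) : ℝ :=
  Real.exp (-(1 / (1 + fwTime T j)) + 1 / (1 + fwTime T (j + 1)))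

/-- `√a_{t_j} = e^{t_j/(1+t_j)}`. -/
noncomputable def fwSqa (T j : ℕ) : ℝ := Real.exp (fwTime T j / (1 + fwTime T j))

/-- `F : [0,1]^n → ℝ` is DR-submodular: for all `x ≤ y` in `[0,1]^n`, coordinates `i` and
`a > 0` with `x + a·e_i, y + a·e_i ∈ [0,1]^n`, one has
`F(x + a·e_i) - F(x) ≥ F(y + a·e_i) - F(y)`. -/
def DRSubmodular {n : ℕ} (F : (Fin n → ℝ) → ℝ) : Prop :=
  ∀ x y : Fin n → ℝ, x ∈ Set.Icc (0 : Fin n → ℝ) 1 → y ∈ Set.Icc (0 : Fin n → ℝ) 1 →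
    x ≤ y → ∀ i : Fin n, ∀ a : ℝ, 0 < a →
      x + a • (Pi.single i 1 : Fin n → ℝ) ∈ Set.Icc (0 : Fin n → ℝ) 1 →
      y + a • (Pi.single i 1 : Fin n → ℝ) ∈ Set.Icc (0 : Fin n → ℝ) 1 →
      F (y + a • (Pi.single i 1 : Fin n → ℝ)) - F y ≤
        F (x + a • (Pi.single i 1 : Fin n → ℝ)) - F x

/-- The continuous linear map `y ↦ ⟨g, y⟩ = ∑ i, g i * y i` on `ℝⁿ`. -/
noncomputable def gradCLM {n : ℕ} (g : Fin n → ℝ) : (Fin n → ℝ) →L[ℝ] ℝ :=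
  ∑ i, g i • (ContinuousLinearMap.proj i : (Fin n → ℝ) →L[ℝ] ℝ)

/-- `gradF` is the gradient of `F` on the box `[0,1]^n`: at each point of the box, `F` is
differentiable within the box with derivative `y ↦ ⟨gradF z, y⟩`. -/
def HasGradientOnBox {n : ℕ} (F : (Fin n → ℝ) → ℝ) (gradF : (Fin n → ℝ) → Fin n → ℝ) : Prop :=
  ∀ z ∈ Set.Icc (0 : Fin n → ℝ) 1, HasFDerivWithinAt F (gradCLM (gradF z)) (Set.Icc 0 1) z

/-! Along a nonnegative direction `u`, DR-submodularity gives `μ ↦ F (x + μ • u)` antitone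
increments. Comparing the increments before and after `θ` on a fine grid, and using `F ≥ 0`,
yields `F (x + θ • u) ≥ (1 - θ) F x` in the limit; with `u = (y ⊔ x - x) / θ` this is
`F (y ⊔ x) ≥ (1 - θ) F x` whenever `y ≤ θ`. For the Frank–Wolfe schedule,
`e^{-t_j/(1+t_j)} = H_T / (H_T + H_j)` and the step ratio is the quotient of two consecutive such
values, so each convex step preserves `x(t_j) ≤ 1 - e^{-t_j/(1+t_j)}`. -/

open Real Finset Filter Topology

lemma harmonicNum_nonneg (j : ℕ) : 0 ≤ harmonicNum j :=
  sum_nonneg fun _ _ => by positivity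

lemma harmonicNum_mono {j k : ℕ} (h : j ≤ k) : harmonicNum j ≤ harmonicNum k :=
  sum_le_sum_of_subset_of_nonneg (range_subset_range.2 h) fun _ _ _ => by positivity

lemma one_div_one_add_fwTime (T j : ℕ) :
    1 / (1 + fwTime T j) = 1 - log (1 + harmonicNum j / harmonicNum T) := by
  simp [fwTime]

lemma fwRatio_eq (T j : ℕ) :
    fwRatio T j =
      (1 + harmonicNum j / harmonicNum T) / (1 + harmonicNum (j + 1) / harmonicNum T) := by
  have := harmonicNum_nonneg T
  have := harmonicNum_nonneg j
  have := harmonicNum_nonneg (j + 1)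
  rw [fwRatio, one_div_one_add_fwTime, one_div_one_add_fwTime,
    show ∀ a b : ℝ, -(1 - a) + (1 - b) = a - b by intros; ring, exp_sub,
    exp_log (by positivity), exp_log (by positivity)]

lemma exp_neg_fwTime_div {T j : ℕ} (hj : j ≤ T) :
    exp (-fwTime T j / (1 + fwTime T j)) = (1 + harmonicNum j / harmonicNum T)⁻¹ := by
  set a := harmonicNum j / harmonicNum T
  have ha0 : 0 ≤ a := div_nonneg (harmonicNum_nonneg j) (harmonicNum_nonneg T)
  have ha1 : a ≤ 1 := div_le_one_of_le₀ (harmonicNum_mono hj) (harmonicNum_nonneg T)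
  -- `log (1 + a) ≤ log 2 < 1`, so `1 + t_j = 1 / (1 - log (1 + a))` is finite and nonzero
  have hlog : log (1 + a) < 1 :=
    (log_le_log (by positivity) (by linarith : 1 + a ≤ 2)).trans_lt
      (log_two_lt_d9.trans (by norm_num))
  have hden : 1 + fwTime T j ≠ 0 := by
    intro h
    have := one_div_one_add_fwTime T j
    rw [h, div_zero] at this
    linarith
  rw [show -fwTime T j / (1 + fwTime T j) = 1 / (1 + fwTime T j) - 1 by field_simp; ring,
    one_div_one_add_fwTime, show 1 - log (1 + a) - 1 = -log (1 + a) by ring, exp_neg,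
    exp_log (by positivity)]

lemma sub_mul_add_mul_le_mul_of_antitone_increments (f : ℕ → ℝ) {p q : ℕ} (hpq : p ≤ q)
    (hf : ∀ k k', k ≤ k' → k' < q → f (k' + 1) - f k' ≤ f (k + 1) - f k) :
    (q - p) * f 0 + p * f q ≤ q * f p := by
  obtain ⟨d, hd⟩ : ∃ d : ℕ → ℝ, ∀ k, f (k + 1) - f k = d k := ⟨_, fun _ => rfl⟩
  have hsum : 0 ≤ ∑ k ∈ range p, ∑ k' ∈ Ico p q, (d k - d k') :=
    sum_nonneg fun k hk => sum_nonneg fun k' hk' => by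
      rw [mem_range] at hk
      rw [mem_Ico] at hk'
      rw [← hd, ← hd]
      exact sub_nonneg.2 (hf k k' (by omega) hk'.2)
  have hfirst : ∑ k ∈ range p, d k = f p - f 0 := by simp only [← hd, sum_range_sub f]
  have hlast : ∑ k ∈ Ico p q, d k = f q - f p := by simp only [← hd, sum_Ico_sub f hpq]
  simp only [sum_sub_distrib, sum_const, Nat.card_Ico, card_range, nsmul_eq_mul, ← mul_sum,
    hfirst, hlast, Nat.cast_sub hpq] at hsum
  linarith

lemma one_sub_mul_le_of_antitone_increments (g : ℝ → ℝ) (hg : ∀ μ ∈ Set.Icc (0 : ℝ) 1, 0 ≤ g μ)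
    (hinc : ∀ a b h : ℝ, 0 ≤ a → a ≤ b → 0 ≤ h → b + h ≤ 1 → g (b + h) - g b ≤ g (a + h) - g a)
    {θ : ℝ} (hθ : θ ∈ Set.Icc (0 : ℝ) 1) : (1 - θ) * g 0 ≤ g θ := by
  obtain ⟨hθ0, hθ1⟩ := hθ
  rcases hθ0.eq_or_lt with rfl | hθpos
  · simp
  have hg0 : 0 ≤ g 0 := hg 0 ⟨le_rfl, zero_le_one⟩
  -- on the grid `(θ / p) ℕ` with `p = ⌈θ q⌉₊`, `θ` is the `p`-th node and `q` nodes fit in `[0, 1]`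
  have hgrid : ∀ q : ℕ, 1 ≤ q → (1 - θ - 1 / q) * g 0 ≤ g θ := by
    intro q hq
    have hq0 : (0 : ℝ) < q := by exact_mod_cast hq
    set p := ⌈θ * q⌉₊
    have hθq : θ * q ≤ p := Nat.le_ceil _
    have hp : (p : ℝ) < θ * q + 1 := Nat.ceil_lt_add_one (by positivity)
    have hp0 : (0 : ℝ) < p := by positivity
    have hpq : p ≤ q := Nat.ceil_le.2 (by nlinarith)
    set h := θ / p with hh_def
    have hph : (p : ℝ) * h = θ := mul_div_cancel₀ _ hp0.ne'
    have hqh : q * h ≤ 1 := by rw [hh_def, ← mul_div_assoc, div_le_one hp0]; linarith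
    have hh : 0 ≤ h := by positivity
    have key := sub_mul_add_mul_le_mul_of_antitone_increments (fun k => g (k * h)) hpq
      fun k k' hkk' hk' => by
        have : ((k' : ℝ) + 1) * h ≤ 1 :=
          le_trans (mul_le_mul_of_nonneg_right (by exact_mod_cast hk') hh) hqh
        push_cast
        simp only [add_mul, one_mul] at this ⊢
        exact hinc _ _ _ (by positivity)
          (mul_le_mul_of_nonneg_right (by exact_mod_cast hkk') hh) hh this
    have hgq : 0 ≤ g (q * h) := hg _ ⟨by positivity, hqh⟩
    simp only [Nat.cast_zero, zero_mul, hph] at key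
    rw [show (1 - θ - 1 / q) * g 0 = (q - θ * q - 1) * g 0 / q by field_simp, div_le_iff₀' hq0]
    nlinarith
  have hlim : Tendsto (fun q : ℕ => (1 - θ - 1 / (q : ℝ)) * g 0) atTop (𝓝 ((1 - θ) * g 0)) := by
    simpa using (tendsto_const_nhds.sub tendsto_one_div_atTop_nhds_zero_nat).mul_const (g 0)
  exact le_of_tendsto hlim ((eventually_ge_atTop 1).mono hgrid)

namespace DRSubmodular

variable {n : ℕ} {F : (Fin n → ℝ) → ℝ}

lemma sub_le_sub_of_nonneg (hF : DRSubmodular F) {x y : Fin n → ℝ}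
    (hx : x ∈ Set.Icc 0 1) (hy : y ∈ Set.Icc 0 1) (hxy : x ≤ y) (i : Fin n) {a : ℝ} (ha : 0 ≤ a)
    (hxa : x + a • Pi.single i 1 ∈ Set.Icc 0 1) (hya : y + a • Pi.single i 1 ∈ Set.Icc 0 1) :
    F (y + a • Pi.single i 1) - F y ≤ F (x + a • Pi.single i 1) - F x := by
  rcases ha.eq_or_lt with rfl | ha
  · simp
  · exact hF x y hx hy hxy i a ha hxa hya

lemma add_sub_le_add_sub (hF : DRSubmodular F) {x y w : Fin n → ℝ} (hx : 0 ≤ x) (hxy : x ≤ y)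
    (hw : 0 ≤ w) (hyw : y + w ≤ 1) :
    F (y + w) - F y ≤ F (x + w) - F x := by
  classical
  -- add `w` one coordinate at a time
  have hbox : ∀ z (s : Finset (Fin n)), 0 ≤ z → z ≤ y → z + s.piecewise w 0 ∈ Set.Icc 0 1 :=
    fun z s hz hzy =>
    ⟨add_nonneg hz (Finset.le_piecewise_of_le_of_le _ hw le_rfl),
      (add_le_add hzy (Finset.piecewise_le_of_le_of_le _ le_rfl hw)).trans hyw⟩
  have hinsert : ∀ i (s : Finset (Fin n)), i ∉ s →
      (insert i s).piecewise w 0 = s.piecewise w 0 + w i • Pi.single i 1 := by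
    intro i s hi
    ext k
    by_cases hk : k = i
    · subst hk; simp [hi]
    · simp [Finset.piecewise, hk]
  have key : ∀ s : Finset (Fin n),
      F (y + s.piecewise w 0) - F y ≤ F (x + s.piecewise w 0) - F x := by
    intro s
    induction s using Finset.induction_on with
    | empty => simp
    | insert i s hi ih =>
      have hstep := hF.sub_le_sub_of_nonneg (hbox x s hx hxy) (hbox y s (hx.trans hxy) le_rfl)
        (add_le_add hxy le_rfl) i (hw i)
        (by rw [add_assoc, ← hinsert i s hi]; exact hbox x _ hx hxy)
        (by rw [add_assoc, ← hinsert i s hi]; exact hbox y _ (hx.trans hxy) le_rfl)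
      rw [hinsert i s hi, ← add_assoc, ← add_assoc]
      linarith
  simpa using key Finset.univ

lemma one_sub_mul_le_apply_add_smul (hF : DRSubmodular F)
    (hF0 : ∀ z ∈ Set.Icc (0 : Fin n → ℝ) 1, 0 ≤ F z) {x u : Fin n → ℝ} (hx : 0 ≤ x) (hu : 0 ≤ u)
    (hxu : x + u ≤ 1) {θ : ℝ} (hθ : θ ∈ Set.Icc (0 : ℝ) 1) :
    (1 - θ) * F x ≤ F (x + θ • u) := by
  have hseg : ∀ μ : ℝ, 0 ≤ μ → μ ≤ 1 → x + μ • u ∈ Set.Icc 0 1 := fun μ hμ0 hμ1 =>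
    ⟨add_nonneg hx (smul_nonneg hμ0 hu),
      le_trans (add_le_add le_rfl (smul_le_of_le_one_left hu hμ1)) hxu⟩
  simpa using one_sub_mul_le_of_antitone_increments (fun μ => F (x + μ • u))
    (fun μ hμ => hF0 _ (hseg μ hμ.1 hμ.2))
    (fun a b h ha hab hh hbh => by
      simp only [add_smul, ← add_assoc]
      exact hF.add_sub_le_add_sub (add_nonneg hx (smul_nonneg ha hu))
        (add_le_add le_rfl (smul_le_smul_of_nonneg_right hab hu)) (smul_nonneg hh hu)
        (by rw [add_assoc, ← add_smul]; exact (hseg _ (by linarith) hbh).2))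
    hθ

lemma one_sub_mul_le_apply_sup (hF : DRSubmodular F)
    (hF0 : ∀ z ∈ Set.Icc (0 : Fin n → ℝ) 1, 0 ≤ F z) {x y : Fin n → ℝ} (hx : x ∈ Set.Icc 0 1)
    {θ : ℝ} (hθ : θ ∈ Set.Icc (0 : ℝ) 1) (hy : ∀ i, y i ≤ θ) :
    (1 - θ) * F x ≤ F (y ⊔ x) := by
  obtain ⟨hθ0, hθ1⟩ := hθ
  rcases hθ0.eq_or_lt with rfl | hθpos
  · rw [sup_eq_right.2 fun i => (hy i).trans (hx.1 i)]
    simp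
  set w := y ⊔ x - x
  have hw : ∀ i, 0 ≤ w i ∧ w i ≤ θ * (1 - x i) := fun i => by
    have hx0 : 0 ≤ x i := hx.1 i
    have hx1 : x i ≤ 1 := hx.2 i
    have := hy i
    simp only [w, Pi.sub_apply, Pi.sup_apply]
    constructor
    · simp
    · rcases le_total (y i) (x i) with h | h
      · rw [max_eq_right h]; nlinarith
      · rw [max_eq_left h]; nlinarith
  have key := hF.one_sub_mul_le_apply_add_smul hF0 hx.1 (u := θ⁻¹ • w)
    (fun i => by simpa using mul_nonneg (inv_nonneg.2 hθ0) (hw i).1)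
    (fun i => by
      have := (inv_mul_le_iff₀ hθpos).2 (hw i).2
      simp only [Pi.add_apply, Pi.smul_apply, smul_eq_mul, Pi.one_apply]
      linarith)
    ⟨hθ0, hθ1⟩
  rwa [smul_inv_smul₀ hθpos.ne', add_sub_cancel] at key

end DRSubmodular

lemma le_one_sub_of_convex_recursion {ι : Type*} (x v : ℕ → ι → ℝ) (c r : ℕ → ℝ) {T : ℕ}
    (h0 : ∀ i, x 0 i ≤ 1 - c 0) (hr : ∀ j < T, r j ∈ Set.Icc (0 : ℝ) 1)
    (hc : ∀ j < T, c (j + 1) = r j * c j) (hv : ∀ j < T, ∀ i, v j i ≤ 1)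
    (hstep : ∀ j < T, x (j + 1) = r j • x j + (1 - r j) • v j) :
    ∀ j ≤ T, ∀ i, x j i ≤ 1 - c j := by
  intro j
  induction j with
  | zero => exact fun _ => h0
  | succ j ih =>
    intro hj i
    have hjT : j < T := hj
    have hxj := ih hjT.le i
    have hvj := hv j hjT i
    obtain ⟨hr0, hr1⟩ := hr j hjT
    rw [hstep j hjT, hc j hjT]
    simp only [Pi.add_apply, Pi.smul_apply, smul_eq_mul]
    nlinarith [mul_le_mul_of_nonneg_left hxj hr0, mul_le_mul_of_nonneg_left hvj (sub_nonneg.2 hr1)]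

lemma fwRatio_mem_Icc (T j : ℕ) : fwRatio T j ∈ Set.Icc (0 : ℝ) 1 := by
  have := harmonicNum_nonneg T
  have := harmonicNum_nonneg j
  have := harmonicNum_nonneg (j + 1)
  rw [fwRatio_eq]
  refine ⟨by positivity, div_le_one_of_le₀ ?_ (by positivity)⟩
  gcongr
  exact harmonicNum_mono j.le_succ

lemma exp_neg_fwTime_div_succ {T j : ℕ} (hj : j < T) :
    exp (-fwTime T (j + 1) / (1 + fwTime T (j + 1))) =
      fwRatio T j * exp (-fwTime T j / (1 + fwTime T j)) := by
  have := harmonicNum_nonneg T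
  have := harmonicNum_nonneg j
  rw [exp_neg_fwTime_div hj, exp_neg_fwTime_div hj.le, fwRatio_eq]
  field_simp

theorem fw_join_opt_lower_bound_general
    (n : ℕ)
    (F : (Fin n → ℝ) → ℝ)
    (hFnonneg : ∀ z ∈ Set.Icc (0 : Fin n → ℝ) 1, 0 ≤ F z)
    (hDR : DRSubmodular F)
    (P : Set (Fin n → ℝ)) (hPsub : P ⊆ Set.Icc 0 1)
    (T : ℕ)
    (x v : ℕ → Fin n → ℝ)
    (hx0 : x 0 = 0)
    (hvP : ∀ j < T, v j ∈ P)
    (hstep : ∀ j < T, x (j + 1) = fwRatio T j • x j + (1 - fwRatio T j) • v j)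
    (xstar : Fin n → ℝ) (hxstar : xstar ∈ Set.Icc (0 : Fin n → ℝ) 1) :
    ∀ j ≤ T,
      F (x j ⊔ xstar) ≥ Real.exp (-(fwTime T j) / (1 + fwTime T j)) * F xstar := by
  intro j hj
  set c : ℕ → ℝ := fun k => exp (-fwTime T k / (1 + fwTime T k))
  have hc : c j ∈ Set.Icc (0 : ℝ) 1 := by
    have := div_nonneg (harmonicNum_nonneg j) (harmonicNum_nonneg T)
    simp only [c, exp_neg_fwTime_div hj]
    exact ⟨by positivity, inv_le_one_of_one_le₀ (by linarith)⟩
  have hiter : ∀ i, x j i ≤ 1 - c j :=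
    le_one_sub_of_convex_recursion x v c (fwRatio T)
      (fun i => by simp [c, hx0, fwTime, harmonicNum]) (fun k _ => fwRatio_mem_Icc T k)
      (fun k hk => exp_neg_fwTime_div_succ hk) (fun k hk i => (hPsub (hvP k hk)).2 i) hstep j hj
  have key := hDR.one_sub_mul_le_apply_sup hFnonneg hxstar
    ⟨sub_nonneg.2 hc.2, sub_le_self _ hc.1⟩ hiter
  rwa [sub_sub_cancel] at key

/-- Lemma 2 of the paper. For the Frank–Wolfe iterates and any
`x* ∈ [0,1]^n`, one has `F(x(t_j) ∨ x*) ≥ e^{-t_j/(1+t_j)} F(x*)` for all `j ∈ {0,…,T}`. -/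
theorem fw_join_opt_lower_bound
    (n : ℕ) (hn : 1 ≤ n)
    (F : (Fin n → ℝ) → ℝ)
    (hFnonneg : ∀ z ∈ Set.Icc (0 : Fin n → ℝ) 1, 0 ≤ F z)
    (hDR : DRSubmodular F)
    (P : Set (Fin n → ℝ)) (hPsub : P ⊆ Set.Icc 0 1) (hPconv : Convex ℝ P)
    (h0P : (0 : Fin n → ℝ) ∈ P)
    (T : ℕ) (hT : 1 ≤ T)
    (x v : ℕ → Fin n → ℝ)
    (hx0 : x 0 = 0)
    (hvP : ∀ j < T, v j ∈ P)
    (hstep : ∀ j < T, x (j + 1) = fwRatio T j • x j + (1 - fwRatio T j) • v j)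
    (xstar : Fin n → ℝ) (hxstar : xstar ∈ Set.Icc (0 : Fin n → ℝ) 1) :
    ∀ j ≤ T,
      F (x j ⊔ xstar) ≥ Real.exp (-(fwTime T j) / (1 + fwTime T j)) * F xstar :=
  fw_join_opt_lower_bound_general n F hFnonneg hDR P hPsub T x v hx0 hvP hstep xstar hxstar
end

section
/- Let F : [0,1]^n → ℝ be nonnegative, differentiable and DR-submodular, let P ⊆ [0,1]^n be convex, let x ∈ P, let x* ∈ P, and let v ∈ P satisfy ⟨∇F(x), v⟩ = max_{w ∈ P} ⟨∇F(x), w⟩. Then ⟨∇F(x), v − x⟩ ≥ F(x ∨ x*) − 2F(x). -/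
lemma gradCLM_apply {n : ℕ} (g y : Fin n → ℝ) : gradCLM g y = ∑ i, g i * y i := by
  simp [gradCLM]

/-- derivative of the line `a ↦ u + a • c` within a set. -/
lemma line_hasDerivWithinAt {n : ℕ} (u c : Fin n → ℝ) (s : Set ℝ) (t : ℝ) :
    HasDerivWithinAt (fun a : ℝ => u + a • c) c s t := by
  have h : HasDerivAt (fun a : ℝ => u + a • c) c t := by
    simpa using (((hasDerivAt_id t).smul_const c).const_add u)
  exact h.hasDerivWithinAt

/-- DR-submodularity implies the gradient is antitone coordinatewise (with strict room). -/
lemma grad_antitone_coord {n : ℕ} {F : (Fin n → ℝ) → ℝ} {gradF : (Fin n → ℝ) → Fin n → ℝ}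
    (hgrad : HasGradientOnBox F gradF) (hDR : DRSubmodular F)
    {u w : Fin n → ℝ} (hu : u ∈ Set.Icc (0 : Fin n → ℝ) 1) (hw : w ∈ Set.Icc (0 : Fin n → ℝ) 1)
    (huw : u ≤ w) (i : Fin n) (hlt : u i < w i) : gradF w i ≤ gradF u i := by
  set a₀ : ℝ := w i - u i with ha₀def
  have ha₀ : 0 < a₀ := sub_pos.mpr hlt
  set e : Fin n → ℝ := Pi.single i 1 with he
  have hu0 : ∀ j, (0:ℝ) ≤ u j := fun j => by simpa using hu.1 j
  have hu1 : ∀ j, u j ≤ 1 := fun j => by simpa using hu.2 j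
  have hw0 : ∀ j, (0:ℝ) ≤ w j := fun j => by simpa using hw.1 j
  have hw1 : ∀ j, w j ≤ 1 := fun j => by simpa using hw.2 j
  have huw' : ∀ j, u j ≤ w j := fun j => huw j
  have happ1 : ∀ (z : Fin n → ℝ) (a : ℝ) (j : Fin n),
      (z + a • e) j = z j + (if j = i then a else 0) := by
    intro z a j; simp [he, Pi.single_apply, mul_ite]
  have happ2 : ∀ (z : Fin n → ℝ) (a : ℝ) (j : Fin n),
      (z + a • (-e)) j = z j - (if j = i then a else 0) := by
    intro z a j; simp [he, Pi.single_apply, mul_ite, sub_eq_add_neg]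
  have hmaps1 : Set.MapsTo (fun a : ℝ => u + a • e) (Set.Icc 0 a₀) (Set.Icc 0 1) := by
    rintro a ⟨ha1, ha2⟩
    constructor <;> intro j
    · show (0 : Fin n → ℝ) j ≤ (u + a • e) j
      rw [happ1]
      simp only [Pi.zero_apply]
      split_ifs with h
      · subst h; nlinarith [hu0 j]
      · simpa using hu0 j
    · show (u + a • e) j ≤ (1 : Fin n → ℝ) j
      rw [happ1]
      simp only [Pi.one_apply]
      split_ifs with h
      · subst h; nlinarith [hw1 j, huw' j]
      · simpa using hu1 j
  have hmaps2 : Set.MapsTo (fun a : ℝ => w + a • (-e)) (Set.Icc 0 a₀) (Set.Icc 0 1) := by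
    rintro a ⟨ha1, ha2⟩
    constructor <;> intro j
    · show (0 : Fin n → ℝ) j ≤ (w + a • (-e)) j
      rw [happ2]
      simp only [Pi.zero_apply]
      split_ifs with h
      · subst h; nlinarith [hu0 j]
      · simpa using hw0 j
    · show (w + a • (-e)) j ≤ (1 : Fin n → ℝ) j
      rw [happ2]
      simp only [Pi.one_apply]
      split_ifs with h
      · subst h; nlinarith [hw1 j]
      · simpa using hw1 j
  have hd1 : HasDerivWithinAt (fun a : ℝ => F (u + a • e)) (gradF u i) (Set.Icc 0 a₀) 0 := by
    have hFu : HasFDerivWithinAt F (gradCLM (gradF u)) (Set.Icc 0 1)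
        ((fun a : ℝ => u + a • e) 0) := by simpa using hgrad u hu
    have := hFu.comp_hasDerivWithinAt (0 : ℝ)
      (line_hasDerivWithinAt u e (Set.Icc 0 a₀) 0) hmaps1
    have he' : gradCLM (gradF u) e = gradF u i := by
      rw [gradCLM_apply]
      simp [he, Pi.single_apply, mul_ite]
    rw [he'] at this
    exact this
  have hd2 : HasDerivWithinAt (fun a : ℝ => F (w + a • (-e))) (-(gradF w i)) (Set.Icc 0 a₀) 0 := by
    have hFw : HasFDerivWithinAt F (gradCLM (gradF w)) (Set.Icc 0 1)
        ((fun a : ℝ => w + a • (-e)) 0) := by simpa using hgrad w hw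
    have := hFw.comp_hasDerivWithinAt (0 : ℝ)
      (line_hasDerivWithinAt w (-e) (Set.Icc 0 a₀) 0) hmaps2
    have he' : gradCLM (gradF w) (-e) = -(gradF w i) := by
      rw [map_neg, gradCLM_apply]
      simp [he, Pi.single_apply, mul_ite]
    rw [he'] at this
    exact this
  have hIcc : Set.Icc (0:ℝ) a₀ \ {0} = Set.Ioc 0 a₀ := by
    ext t; simp [Set.mem_Ioc, Set.mem_Icc, and_comm, lt_iff_le_and_ne, and_assoc, eq_comm]
  have hslope1 : Filter.Tendsto (fun a : ℝ => (F (u + a • e) - F u) / a)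
      (nhdsWithin 0 (Set.Ioi 0)) (nhds (gradF u i)) := by
    have := hasDerivWithinAt_iff_tendsto_slope.mp hd1
    rw [hIcc, nhdsWithin_Ioc_eq_nhdsGT ha₀] at this
    refine this.congr (fun a => ?_)
    simp [slope_def_field, div_eq_mul_inv, mul_comm]
  have hslope2 : Filter.Tendsto (fun a : ℝ => (F w - F (w + a • (-e))) / a)
      (nhdsWithin 0 (Set.Ioi 0)) (nhds (gradF w i)) := by
    have := (hasDerivWithinAt_iff_tendsto_slope.mp hd2).neg
    rw [hIcc, nhdsWithin_Ioc_eq_nhdsGT ha₀, neg_neg] at this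
    refine this.congr (fun a => ?_)
    simp only [slope_def_field, sub_zero, zero_smul, add_zero]
    ring
  have hev : ∀ᶠ a in nhdsWithin (0:ℝ) (Set.Ioi 0),
      (F w - F (w + a • (-e))) / a ≤ (F (u + a • e) - F u) / a := by
    filter_upwards [Ioc_mem_nhdsGT_of_mem (Set.left_mem_Ico.mpr ha₀)] with a ha
    obtain ⟨ha1, ha2⟩ := ha
    have hy : w + a • (-e) ∈ Set.Icc (0 : Fin n → ℝ) 1 := hmaps2 ⟨le_of_lt ha1, ha2⟩
    have hxy : u ≤ w + a • (-e) := by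
      intro j
      rw [happ2]
      split_ifs with h
      · subst h; linarith
      · simpa using huw' j
    have hweq : w + a • (-e) + a • (Pi.single i 1 : Fin n → ℝ) = w := by
      funext j
      have : (w + a • (-e) + a • e) j = (w + a • (-e)) j + (if j = i then a else 0) :=
        happ1 _ a j
      rw [← he, this, happ2]
      ring
    have hkey := hDR u (w + a • (-e)) hu hy hxy i a ha1
      (hmaps1 ⟨le_of_lt ha1, ha2⟩) (by rw [← he, hweq]; exact hw)
    rw [← he, hweq] at hkey
    have h' : F w - F (w + a • (-e)) ≤ F (u + a • e) - F u := by simpa [he] using hkey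
    exact (div_le_div_iff_of_pos_right ha1).mpr h'
  exact le_of_tendsto_of_tendsto hslope2 hslope1 hev

/-- Concavity bounds along nonnegative directions. -/
lemma grad_mvt_bounds {n : ℕ} {F : (Fin n → ℝ) → ℝ} {gradF : (Fin n → ℝ) → Fin n → ℝ}
    (hgrad : HasGradientOnBox F gradF) (hDR : DRSubmodular F)
    {a b : Fin n → ℝ} (ha : a ∈ Set.Icc (0 : Fin n → ℝ) 1) (hb : b ∈ Set.Icc (0 : Fin n → ℝ) 1)
    (hab : a ≤ b) :
    (∑ i, gradF b i * (b i - a i)) ≤ F b - F a ∧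
      F b - F a ≤ ∑ i, gradF a i * (b i - a i) := by
  have ha0 : ∀ j, (0:ℝ) ≤ a j := fun j => by simpa using ha.1 j
  have hb1 : ∀ j, b j ≤ 1 := fun j => by simpa using hb.2 j
  have hab' : ∀ j, a j ≤ b j := fun j => hab j
  have happ : ∀ (t : ℝ) (j : Fin n), (a + t • (b - a)) j = a j + t * (b j - a j) := by
    intro t j; simp
  have hmem : ∀ t ∈ Set.Icc (0:ℝ) 1, a + t • (b - a) ∈ Set.Icc (0 : Fin n → ℝ) 1 := by
    rintro t ⟨ht0, ht1⟩
    constructor <;> intro j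
    · show (0 : Fin n → ℝ) j ≤ (a + t • (b - a)) j
      rw [happ]; simp only [Pi.zero_apply]
      nlinarith [ha0 j, hab' j]
    · show (a + t • (b - a)) j ≤ (1 : Fin n → ℝ) j
      rw [happ]; simp only [Pi.one_apply]
      nlinarith [hb1 j, hab' j]
  set g : ℝ → ℝ := fun t => F (a + t • (b - a)) with hgdef
  set G : ℝ → ℝ := fun t => ∑ i, gradF (a + t • (b - a)) i * (b i - a i) with hGdef
  have hg : ∀ t ∈ Set.Icc (0:ℝ) 1, HasDerivWithinAt g (G t) (Set.Icc 0 1) t := by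
    intro t ht
    have hF : HasFDerivWithinAt F (gradCLM (gradF (a + t • (b - a)))) (Set.Icc 0 1)
        ((fun t : ℝ => a + t • (b - a)) t) := hgrad _ (hmem t ht)
    have h := hF.comp_hasDerivWithinAt t
      (line_hasDerivWithinAt a (b - a) (Set.Icc 0 1) t) (fun s hs => hmem s hs)
    have heq : gradCLM (gradF (a + t • (b - a))) (b - a) = G t := by
      rw [gradCLM_apply]; simp [hGdef]
    rw [heq] at h
    exact h
  have hcont : ContinuousOn g (Set.Icc 0 1) := fun t ht => (hg t ht).continuousWithinAt
  have hderiv : ∀ t ∈ Set.Ioo (0:ℝ) 1, HasDerivAt g (G t) t := fun t ht =>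
    (hg t ⟨ht.1.le, ht.2.le⟩).hasDerivAt (Icc_mem_nhds ht.1 ht.2)
  obtain ⟨c, hc, hceq⟩ := exists_hasDerivAt_eq_slope g G zero_lt_one hcont hderiv
  have hg1 : g 1 = F b := by simp [hgdef]
  have hg0 : g 0 = F a := by simp [hgdef]
  rw [hg1, hg0] at hceq
  simp only [sub_zero, div_one] at hceq
  have hcmem := hmem c ⟨hc.1.le, hc.2.le⟩
  have hale : a ≤ a + c • (b - a) := by
    intro j; rw [happ]; nlinarith [hab' j, hc.1]
  have hleb : a + c • (b - a) ≤ b := by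
    intro j; rw [happ]; nlinarith [hab' j, hc.2]
  have hupper : G c ≤ ∑ i, gradF a i * (b i - a i) := by
    apply Finset.sum_le_sum
    intro i _
    rcases eq_or_lt_of_le (hab' i) with h | h
    · rw [← h]; simp
    · refine mul_le_mul_of_nonneg_right ?_ (by linarith)
      refine grad_antitone_coord hgrad hDR ha hcmem hale i ?_
      rw [happ]; nlinarith [hc.1]
  have hlower : ∑ i, gradF b i * (b i - a i) ≤ G c := by
    apply Finset.sum_le_sum
    intro i _
    rcases eq_or_lt_of_le (hab' i) with h | h
    · rw [← h]; simp
    · refine mul_le_mul_of_nonneg_right ?_ (by linarith)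
      refine grad_antitone_coord hgrad hDR hcmem hb hleb i ?_
      rw [happ]; nlinarith [hc.2]
  exact ⟨hceq ▸ hlower, hceq ▸ hupper⟩

/-- For nonnegative differentiable DR-submodular `F`, convex `P ⊆ [0,1]^n`,
`x, x* ∈ P`, and `v ∈ P` maximizing `⟨∇F(x), ·⟩` over `P`, one has
`⟨∇F(x), v - x⟩ ≥ F(x ∨ x*) - 2 F(x)`. -/
theorem fw_linear_maximizer_lower_bound
    (n : ℕ) (F : (Fin n → ℝ) → ℝ) (gradF : (Fin n → ℝ) → Fin n → ℝ)
    (hFnonneg : ∀ z ∈ Set.Icc (0 : Fin n → ℝ) 1, 0 ≤ F z)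
    (hgrad : HasGradientOnBox F gradF)
    (hDR : DRSubmodular F)
    (P : Set (Fin n → ℝ)) (hPsub : P ⊆ Set.Icc 0 1) (hPconv : Convex ℝ P)
    (x xstar v : Fin n → ℝ) (hx : x ∈ P) (hxstar : xstar ∈ P) (hvP : v ∈ P)
    (hvmax : ∀ w ∈ P, ∑ i, gradF x i * w i ≤ ∑ i, gradF x i * v i) :
    ∑ i, gradF x i * (v i - x i) ≥ F (x ⊔ xstar) - 2 * F x := by
  set z : Fin n → ℝ := x ⊔ xstar with hz
  set y : Fin n → ℝ := x ⊓ xstar with hy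
  have hxB : x ∈ Set.Icc (0 : Fin n → ℝ) 1 := hPsub hx
  have hxsB : xstar ∈ Set.Icc (0 : Fin n → ℝ) 1 := hPsub hxstar
  have hzB : z ∈ Set.Icc (0 : Fin n → ℝ) 1 :=
    ⟨hxB.1.trans le_sup_left, sup_le hxB.2 hxsB.2⟩
  have hyB : y ∈ Set.Icc (0 : Fin n → ℝ) 1 :=
    ⟨le_inf hxB.1 hxsB.1, inf_le_left.trans hxB.2⟩
  have hupper := (grad_mvt_bounds hgrad hDR hxB hzB le_sup_left).2
  have hlower := (grad_mvt_bounds hgrad hDR hyB hxB inf_le_left).1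
  have hFy : 0 ≤ F y := hFnonneg y hyB
  have hvs : ∑ i, gradF x i * xstar i ≤ ∑ i, gradF x i * v i := hvmax xstar hxstar
  have e1 : ∑ i, gradF x i * (v i - x i)
      = (∑ i, gradF x i * v i) - ∑ i, gradF x i * x i := by
    simp [mul_sub, Finset.sum_sub_distrib]
  have e2 : ∑ i, gradF x i * (z i - x i)
      = (∑ i, gradF x i * z i) - ∑ i, gradF x i * x i := by
    simp [mul_sub, Finset.sum_sub_distrib]
  have e3 : ∑ i, gradF x i * (x i - y i)
      = (∑ i, gradF x i * x i) - ∑ i, gradF x i * y i := by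
    simp [mul_sub, Finset.sum_sub_distrib]
  have e4 : (∑ i, gradF x i * z i) + ∑ i, gradF x i * y i
      = (∑ i, gradF x i * x i) + ∑ i, gradF x i * xstar i := by
    rw [← Finset.sum_add_distrib, ← Finset.sum_add_distrib]
    apply Finset.sum_congr rfl
    intro i _
    have hzy : z i + y i = x i + xstar i := by
      simp only [hz, hy, Pi.sup_apply, Pi.inf_apply]
      exact max_add_min _ _
    rw [← mul_add, ← mul_add, hzy]
  rw [e1] at *
  rw [e2] at hupper
  rw [e3] at hlower
  linarith
end
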